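/- Consider the training loss f of a fully connected neural network of depth n with homogeneous non-linear activation σ(z) = α·max{z,0} − ᾱ·max{−z,0}, α ≠ ᾱ. For Lebesgue-almost every θ′ ∈ ℝ^d there exist diagonal matrices D'_{i,j} ∈ ℝ^{d_j×d_j} (i = 1,…,|S|, j = 1,…,n−1) with diagonal entries in {α, ᾱ}, and an open region D_{θ′} ⊆ ℝ^d containing θ′ that is closed under positive rescaling of weight matrices (i.e. under (W_1,…,W_n) ↦ (c_1 W_1,…,c_n W_n) for any c_1,…,c_n > 0), such that f coincides on D_{θ′} with the function θ ↦ (1/|S|) Σ_{i=1}^{|S|} ℓ( W_n·D'_{i,n−1}·W_{n−1}·D'_{i,n−2}·W_{n−2} ⋯ D'_{i,1}·W_1·x_i, y_i ). -/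

import Mathlib

open scoped RealInnerProductSpace
open Matrix

noncomputable section

/-- The family of weight matrices of a depth-`n` fully connected network with layer widths
`dims 0, dims 1, …, dims n`: `W j` maps `ℝ^{dims j}` to `ℝ^{dims (j+1)}` (zero-indexed). -/
abbrev WeightFam (n : ℕ) (dims : ℕ → ℕ) : Type :=
  ∀ j : Fin n, Matrix (Fin (dims (j.val + 1))) (Fin (dims j.val)) ℝ

/-- Rectangular matrix with ones on the diagonal: equals the identity matrix whenever the
two dimensions coincide. -/
def castId (p q : ℕ) : Matrix (Fin p) (Fin q) ℝ :=
  Matrix.of fun i j => if (i : ℕ) = (j : ℕ) then 1 else 0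

/-- Multiplication of a Euclidean vector by a matrix. -/
def mulVecE {p q : ℕ} (M : Matrix (Fin p) (Fin q) ℝ) (v : EuclideanSpace ℝ (Fin q)) :
    EuclideanSpace ℝ (Fin p) :=
  (EuclideanSpace.equiv (Fin p) ℝ).symm (M.mulVec (EuclideanSpace.equiv (Fin q) ℝ v))

/-- The homogeneous activation `σ(z) = α·max{z,0} - α'·max{-z,0}`. -/
def actFn (α α' : ℝ) (z : ℝ) : ℝ := α * max z 0 - α' * max (-z) 0

/-- Entrywise application of the activation. -/
def actVec (α α' : ℝ) {p : ℕ} (v : EuclideanSpace ℝ (Fin p)) : EuclideanSpace ℝ (Fin p) :=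
  (EuclideanSpace.equiv (Fin p) ℝ).symm fun i => actFn α α' (v i)

/-- Forward pass of the network: the output of layer `k` on input `x`, the activation being
applied after every layer except the last one. -/
def layerOut {n : ℕ} (α α' : ℝ) (dims : ℕ → ℕ) (W : WeightFam n dims)
    (x : EuclideanSpace ℝ (Fin (dims 0))) : (k : ℕ) → EuclideanSpace ℝ (Fin (dims k))
  | 0 => x
  | k + 1 =>
      if hk : k < n then
        if k + 1 = n then mulVecE (W ⟨k, hk⟩) (layerOut α α' dims W x k)
        else actVec α α' (mulVecE (W ⟨k, hk⟩) (layerOut α α' dims W x k))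
      else 0

/-- The training loss of the fully connected neural network with activation `σ`:
`f(θ) = (1/|S|) ∑ᵢ ℓ(h_θ(xᵢ), yᵢ)`. -/
def netLossNL {Y : Type*} {s : ℕ} {n d : ℕ} (dims : ℕ → ℕ) (α α' : ℝ)
    (loss : EuclideanSpace ℝ (Fin (dims n)) → Y → ℝ)
    (x : Fin s → EuclideanSpace ℝ (Fin (dims 0))) (y : Fin s → Y)
    (arr : EuclideanSpace ℝ (Fin d) →ₗ[ℝ] WeightFam n dims)
    (θ : EuclideanSpace ℝ (Fin d)) : ℝ :=
  (1 / (s : ℝ)) * ∑ i, loss (layerOut α α' dims (arr θ) (x i) n) (y i)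

/-- `segProdD dims W D a b = (D_b W_{b-1}) · (D_{b-1} W_{b-2}) ⋯ (D_{a+1} W_a)`
(zero-indexed weight matrices, `D k` being the diagonal entries of the activation-pattern
matrix at level `k`): the paper's fixed-pattern product `(D'_{i,*} W_*)_{b : a+1}`
(one-indexed), empty products being identity matrices. -/
def segProdD {n : ℕ} (dims : ℕ → ℕ) (W : WeightFam n dims)
    (D : (j : ℕ) → Fin (dims j) → ℝ) (a : ℕ) :
    (b : ℕ) → Matrix (Fin (dims b)) (Fin (dims a)) ℝ
  | 0 => castId (dims 0) (dims a)
  | b + 1 =>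
      if a = b + 1 then castId (dims (b + 1)) (dims a)
      else if hb : b < n then
        Matrix.diagonal (D (b + 1)) * W ⟨b, hb⟩ * segProdD dims W D a b
      else 0

/-- The fixed-activation-pattern loss
`θ ↦ (1/|S|) ∑ᵢ ℓ((D'_{i,*}W_*)_{n:1} xᵢ, yᵢ)`. -/
def patLoss {Y : Type*} {s : ℕ} {n d : ℕ} (dims : ℕ → ℕ)
    (loss : EuclideanSpace ℝ (Fin (dims n)) → Y → ℝ)
    (x : Fin s → EuclideanSpace ℝ (Fin (dims 0))) (y : Fin s → Y)
    (D : Fin s → (j : ℕ) → Fin (dims j) → ℝ)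
    (arr : EuclideanSpace ℝ (Fin d) →ₗ[ℝ] WeightFam n dims)
    (θ : EuclideanSpace ℝ (Fin d)) : ℝ :=
  (1 / (s : ℝ)) * ∑ i, loss (mulVecE (segProdD dims (arr θ) (D i) 0 n) (x i)) (y i)

/-- The Hessian of `f` at `x`, regarded as a quadratic form, evaluated at `v`. -/
def hessQ {E : Type*} [NormedAddCommGroup E] [InnerProductSpace ℝ E] [CompleteSpace E]
    (f : E → ℝ) (x v : E) : ℝ :=
  ⟪v, fderiv ℝ (gradient f) x v⟫

/-- Frobenius norm of a matrix. -/
def frobNorm {p q : ℕ} (M : Matrix (Fin p) (Fin q) ℝ) : ℝ :=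
  Real.sqrt (∑ i, ∑ j, M i j ^ 2)

section AuxNull

open MeasureTheory

lemma continuous_mvpoly_cons {m : ℕ} (p : MvPolynomial (Fin (m+1)) ℝ) :
    Continuous fun yw : (Fin m → ℝ) × ℝ => MvPolynomial.eval (Fin.cons yw.2 yw.1) p := by
  refine (MvPolynomial.continuous_eval (p := p)).comp ?_
  apply continuous_pi
  intro i
  induction i using Fin.cases with
  | zero => simpa using continuous_snd
  | succ j => simpa using (continuous_apply j).comp' continuous_fst

lemma mv_zero_null : ∀ (m : ℕ) (p : MvPolynomial (Fin m) ℝ), p ≠ 0 →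
    volume {v : Fin m → ℝ | MvPolynomial.eval v p = 0} = 0 := by
  intro m
  induction m with
  | zero =>
    intro p hp
    convert measure_empty
    · rw [Set.eq_empty_iff_forall_notMem]
      intro v hv
      apply hp
      obtain ⟨c, rfl⟩ := MvPolynomial.C_surjective (Fin 0) p
      simp only [Set.mem_setOf_eq, MvPolynomial.eval_C] at hv
      simp [hv]
    · infer_instance
  | succ m ih =>
    intro p hp
    have hmp := MeasureTheory.volume_preserving_piFinSuccAbove
      (fun _ : Fin (m+1) => ℝ) 0
    set e := MeasurableEquiv.piFinSuccAbove (fun _ : Fin (m+1) => ℝ) 0 with he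
    set T : Set ((Fin m → ℝ) × ℝ) :=
      {yw | MvPolynomial.eval (Fin.cons yw.2 yw.1) p = 0} with hT
    have hTmeas : MeasurableSet T :=
      (isClosed_eq (continuous_mvpoly_cons p) continuous_const).measurableSet
    have hcons : ∀ v : Fin (m+1) → ℝ,
        (Fin.cons ((e v).1) ((e v).2) : Fin (m+1) → ℝ) = v := by
      intro v
      funext i
      induction i using Fin.cases with
      | zero => simp [he, MeasurableEquiv.piFinSuccAbove]
      | succ j =>
        simp [he, MeasurableEquiv.piFinSuccAbove, Fin.succAbove, Fin.removeNth, Fin.tail]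
    have hS : {v : Fin (m+1) → ℝ | MvPolynomial.eval v p = 0}
        = e ⁻¹' (Prod.swap ⁻¹' T) := by
      ext v
      simp only [Set.mem_setOf_eq, Set.mem_preimage, hT, Prod.fst_swap, Prod.snd_swap]
      rw [hcons v]
    rw [hS, hmp.measure_preimage]
    swap
    · exact (hTmeas.preimage measurable_swap).nullMeasurableSet
    rw [Measure.volume_eq_prod, ← Measure.map_apply measurable_swap hTmeas,
      Measure.prod_swap, Measure.measure_prod_null hTmeas]
    set F := MvPolynomial.finSuccEquiv ℝ m p with hF
    have hFne : F ≠ 0 := by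
      intro h
      apply hp
      have := (MvPolynomial.finSuccEquiv ℝ m).injective (a₁ := p) (a₂ := 0)
      simp only [map_zero] at this
      exact this h
    set c := F.leadingCoeff with hc
    have hcne : c ≠ 0 := Polynomial.leadingCoeff_ne_zero.mpr hFne
    have hae : ∀ᵐ w : Fin m → ℝ, MvPolynomial.eval w c ≠ 0 := by
      rw [ae_iff]
      simpa using ih c hcne
    filter_upwards [hae] with w hw
    have hslice : (Prod.mk w ⁻¹' T)
        = {y : ℝ | Polynomial.eval y (Polynomial.map (MvPolynomial.eval w) F) = 0} := by
      ext y
      simp only [Set.mem_preimage, hT, Set.mem_setOf_eq]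
      rw [MvPolynomial.eval_eq_eval_mv_eval']
    rw [hslice]
    have hmapne : Polynomial.map (MvPolynomial.eval w) F ≠ 0 := by
      intro h
      apply hw
      have h2 : MvPolynomial.eval w (F.coeff F.natDegree) = 0 := by
        rw [← Polynomial.coeff_map, h, Polynomial.coeff_zero]
      rw [hc, Polynomial.leadingCoeff]
      exact h2
    exact Set.Finite.measure_zero (Polynomial.finite_setOf_isRoot hmapne) volume

lemma euclid_zero_null {d : ℕ} (p : MvPolynomial (Fin d) ℝ) (hp : p ≠ 0) :
    volume {θ : EuclideanSpace ℝ (Fin d) | MvPolynomial.eval (fun k => θ k) p = 0} = 0 := by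
  have hmp := EuclideanSpace.volume_preserving_symm_measurableEquiv_toLp (Fin d)
  have hset : {θ : EuclideanSpace ℝ (Fin d) | MvPolynomial.eval (fun k => θ k) p = 0}
      = (MeasurableEquiv.toLp 2 (Fin d → ℝ)).symm ⁻¹'
        {v : Fin d → ℝ | MvPolynomial.eval v p = 0} := rfl
  rw [hset, hmp.measure_preimage]
  · exact mv_zero_null d p hp
  · exact ((isClosed_eq (MvPolynomial.continuous_eval (p := p))
      continuous_const).measurableSet).nullMeasurableSet

lemma euclid_continuous_eval {d : ℕ} (p : MvPolynomial (Fin d) ℝ) :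
    Continuous fun θ : EuclideanSpace ℝ (Fin d) => MvPolynomial.eval (fun k => θ k) p := by
  refine (MvPolynomial.continuous_eval (p := p)).comp ?_
  exact continuous_pi fun k =>
    (continuous_apply k).comp (PiLp.continuousLinearEquiv 2 ℝ _).continuous

end AuxNull

section AuxVec

lemma mulVecE_mulVecE {p q r : ℕ} (A : Matrix (Fin p) (Fin q) ℝ)
    (B : Matrix (Fin q) (Fin r) ℝ) (v : EuclideanSpace ℝ (Fin r)) :
    mulVecE A (mulVecE B v) = mulVecE (A * B) v := by
  show (EuclideanSpace.equiv (Fin p) ℝ).symm _ = _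
  unfold mulVecE
  congr 1
  exact Matrix.mulVec_mulVec _ A B

lemma castId_eq_one (p : ℕ) : castId p p = (1 : Matrix (Fin p) (Fin p) ℝ) := by
  ext i j
  simp [castId, Matrix.one_apply, Fin.ext_iff]

lemma mulVecE_one {p : ℕ} (v : EuclideanSpace ℝ (Fin p)) :
    mulVecE (castId p p) v = v := by
  unfold mulVecE
  rw [castId_eq_one, Matrix.one_mulVec]
  rfl

lemma mulVecE_apply {p q : ℕ} (M : Matrix (Fin p) (Fin q) ℝ)
    (v : EuclideanSpace ℝ (Fin q)) (i : Fin p) :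
    mulVecE M v i = M.mulVec (fun j => v j) i := rfl

lemma mulVecE_zero {p q : ℕ} (v : EuclideanSpace ℝ (Fin q)) :
    mulVecE (0 : Matrix (Fin p) (Fin q) ℝ) v = 0 := by
  unfold mulVecE
  rw [Matrix.zero_mulVec]
  rfl

lemma actFn_sign (α α' z : ℝ) :
    (0 < z → actFn α α' z = α * z) ∧ (z < 0 → actFn α α' z = α' * z) ∧
      actFn α α' 0 = 0 := by
  refine ⟨fun h => ?_, fun h => ?_, by simp [actFn]⟩
  · rw [actFn, max_eq_left h.le, max_eq_right (by linarith)]; ring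
  · rw [actFn, max_eq_right h.le, max_eq_left (by linarith)]; ring

end AuxVec

section Net

open MvPolynomial

variable {n d : ℕ} {dims : ℕ → ℕ}

lemma segProdD_zero (W : WeightFam n dims) (D : (j : ℕ) → Fin (dims j) → ℝ) (a : ℕ) :
    segProdD dims W D a 0 = castId (dims 0) (dims a) := rfl

lemma segProdD_succ (W : WeightFam n dims) (D : (j : ℕ) → Fin (dims j) → ℝ) (a b : ℕ) :
    segProdD dims W D a (b+1) =
      if a = b + 1 then castId (dims (b + 1)) (dims a)
      else if hb : b < n then
        Matrix.diagonal (D (b + 1)) * W ⟨b, hb⟩ * segProdD dims W D a b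
      else 0 := rfl

lemma layerOut_zero (α α' : ℝ) (W : WeightFam n dims) (x0 : EuclideanSpace ℝ (Fin (dims 0))) :
    layerOut α α' dims W x0 0 = x0 := rfl

lemma layerOut_succ (α α' : ℝ) (W : WeightFam n dims) (x0 : EuclideanSpace ℝ (Fin (dims 0)))
    (k : ℕ) :
    layerOut α α' dims W x0 (k+1) =
      if hk : k < n then
        if k + 1 = n then mulVecE (W ⟨k, hk⟩) (layerOut α α' dims W x0 k)
        else actVec α α' (mulVecE (W ⟨k, hk⟩) (layerOut α α' dims W x0 k))
      else 0 := rfl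

lemma theta_decomp (θ : EuclideanSpace ℝ (Fin d)) :
    ∑ k : Fin d, θ k • EuclideanSpace.single k (1:ℝ) = θ := by
  simpa [EuclideanSpace.basisFun_apply, EuclideanSpace.basisFun_repr] using
    (EuclideanSpace.basisFun (Fin d) ℝ).sum_repr θ

variable (arr : EuclideanSpace ℝ (Fin d) →ₗ[ℝ] WeightFam n dims)

def entryPoly (j : Fin n) (pp : Fin (dims (j.val+1))) (q : Fin (dims j.val)) :
    MvPolynomial (Fin d) ℝ :=
  ∑ k : Fin d, MvPolynomial.C (arr (EuclideanSpace.single k 1) j pp q) * MvPolynomial.X k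

lemma arr_apply_decomp (θ : EuclideanSpace ℝ (Fin d)) (j : Fin n)
    (pp : Fin (dims (j.val+1))) (q : Fin (dims j.val)) :
    arr θ j pp q = ∑ k : Fin d, θ k * arr (EuclideanSpace.single k 1) j pp q := by
  have h1 : arr θ = ∑ k : Fin d, θ k • arr (EuclideanSpace.single k 1) := by
    conv_lhs => rw [← theta_decomp θ]
    simp [map_sum]
  rw [h1]
  rw [Finset.sum_apply]
  rw [Matrix.sum_apply]
  simp [Matrix.smul_apply]

lemma eval_entryPoly (θ : EuclideanSpace ℝ (Fin d)) (j : Fin n)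
    (pp : Fin (dims (j.val+1))) (q : Fin (dims j.val)) :
    MvPolynomial.eval (fun k => θ k) (entryPoly arr j pp q) = arr θ j pp q := by
  rw [arr_apply_decomp]
  simp [entryPoly, mul_comm]

def polyW (j : Fin n) :
    Matrix (Fin (dims (j.val+1))) (Fin (dims j.val)) (MvPolynomial (Fin d) ℝ) :=
  Matrix.of fun pp q => entryPoly arr j pp q

def castIdP (p q : ℕ) : Matrix (Fin p) (Fin q) (MvPolynomial (Fin d) ℝ) :=
  Matrix.of fun i j => if (i:ℕ) = (j:ℕ) then 1 else 0

def segP (D : (j : ℕ) → Fin (dims j) → ℝ) :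
    (b : ℕ) → Matrix (Fin (dims b)) (Fin (dims 0)) (MvPolynomial (Fin d) ℝ)
  | 0 => castIdP (dims 0) (dims 0)
  | b+1 => if hb : b < n then
      @HMul.hMul (Matrix (Fin (dims (b+1))) (Fin (dims (b+1))) (MvPolynomial (Fin d) ℝ))
        (Matrix (Fin (dims (b+1))) (Fin (dims b)) (MvPolynomial (Fin d) ℝ))
        (Matrix (Fin (dims (b+1))) (Fin (dims b)) (MvPolynomial (Fin d) ℝ)) _
        (Matrix.diagonal (fun p => MvPolynomial.C (D (b+1) p))) (polyW arr ⟨b,hb⟩) * segP D b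
    else 0

lemma polyW_eval (θ : EuclideanSpace ℝ (Fin d)) (j : Fin n) :
    (polyW arr j).map (MvPolynomial.eval (fun k => θ k)) = arr θ j := by
  ext pp q
  simp [polyW, Matrix.map_apply, eval_entryPoly]

lemma segP_eval (D : (j : ℕ) → Fin (dims j) → ℝ) (θ : EuclideanSpace ℝ (Fin d)) : ∀ b,
    (segP arr D b).map (MvPolynomial.eval (fun k => θ k)) = segProdD dims (arr θ) D 0 b := by
  intro b
  induction b with
  | zero =>
    rw [segProdD_zero]
    ext i j
    simp [segP, castIdP, castId, Matrix.map_apply, apply_ite]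
  | succ b ihb =>
    rw [segProdD_succ, if_neg (by omega : ¬ (0 = b+1))]
    by_cases hb : b < n
    · rw [dif_pos hb]
      show (segP arr D (b+1)).map _ = _
      rw [segP, dif_pos hb]
      rw [Matrix.map_mul, Matrix.map_mul]
      rw [polyW_eval, ihb]
      congr 1
      rw [Matrix.diagonal_map (by simp)]
      congr 1
      funext p
      simp
    · rw [dif_neg hb]
      show (segP arr D (b+1)).map _ = _
      rw [segP, dif_neg hb]
      ext i j
      simp [Matrix.map_apply]

def preP (x0 : EuclideanSpace ℝ (Fin (dims 0))) (D : (j : ℕ) → Fin (dims j) → ℝ)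
    (j : Fin n) (p : Fin (dims (j.val+1))) : MvPolynomial (Fin d) ℝ :=
  ∑ q, (polyW arr j * segP arr D j.val) p q * MvPolynomial.C (x0 q)

def preR (W : WeightFam n dims) (x0 : EuclideanSpace ℝ (Fin (dims 0)))
    (D : (j : ℕ) → Fin (dims j) → ℝ) (j : Fin n) : Fin (dims (j.val+1)) → ℝ :=
  fun p => mulVecE (W j * segProdD dims W D 0 j.val) x0 p

lemma preP_eval (x0 : EuclideanSpace ℝ (Fin (dims 0))) (D : (j : ℕ) → Fin (dims j) → ℝ)
    (θ : EuclideanSpace ℝ (Fin d)) (j : Fin n) (p : Fin (dims (j.val+1))) :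
    MvPolynomial.eval (fun k => θ k) (preP arr x0 D j p) = preR (arr θ) x0 D j p := by
  have hm : (polyW arr j * segP arr D j.val).map (MvPolynomial.eval (fun k => θ k))
      = (arr θ j) * segProdD dims (arr θ) D 0 j.val := by
    rw [Matrix.map_mul, polyW_eval, segP_eval]
  calc MvPolynomial.eval (fun k => θ k) (preP arr x0 D j p)
      = ∑ q, MvPolynomial.eval (fun k => θ k) ((polyW arr j * segP arr D j.val) p q) * x0 q := by
        simp [preP]
    _ = ∑ q, ((arr θ j) * segProdD dims (arr θ) D 0 j.val) p q * x0 q := by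
        refine Finset.sum_congr rfl fun q _ => ?_
        rw [← Matrix.map_apply (f := MvPolynomial.eval (fun k => θ k)), hm]
    _ = preR (arr θ) x0 D j p := by
        simp [preR, mulVecE_apply, Matrix.mulVec, dotProduct]

end Net

section Net2

variable {n d : ℕ} {dims : ℕ → ℕ}

lemma segProdD_smul (W W' : WeightFam n dims) (c : Fin n → ℝ)
    (hW : ∀ j, W' j = c j • W j) (D : (j : ℕ) → Fin (dims j) → ℝ) : ∀ b,
    segProdD dims W' D 0 b
      = (∏ k ∈ Finset.range b, (if h : k < n then c ⟨k, h⟩ else 1)) • segProdD dims W D 0 b := by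
  intro b
  induction b with
  | zero => simp [segProdD_zero]
  | succ b ihb =>
    rw [segProdD_succ, segProdD_succ, if_neg (by omega : ¬(0 = b+1)),
      if_neg (by omega : ¬(0 = b+1))]
    by_cases hb : b < n
    · rw [dif_pos hb, dif_pos hb, hW, ihb, Finset.prod_range_succ, dif_pos hb]
      rw [Matrix.mul_smul, Matrix.mul_smul, Matrix.smul_mul, smul_smul]
    · rw [dif_neg hb, dif_neg hb, smul_zero]

lemma mulVecE_smul {p q : ℕ} (a : ℝ) (M : Matrix (Fin p) (Fin q) ℝ)
    (v : EuclideanSpace ℝ (Fin q)) (i : Fin p) :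
    mulVecE (a • M) v i = a * mulVecE M v i := by
  show ((a • M) *ᵥ _) i = _
  rw [Matrix.smul_mulVec]
  rfl

lemma preR_smul (W W' : WeightFam n dims) (c : Fin n → ℝ)
    (hW : ∀ j, W' j = c j • W j) (x0 : EuclideanSpace ℝ (Fin (dims 0)))
    (D : (j : ℕ) → Fin (dims j) → ℝ) (j : Fin n) (p : Fin (dims (j.val+1))) :
    preR W' x0 D j p
      = (c j * ∏ k ∈ Finset.range j.val, (if h : k < n then c ⟨k, h⟩ else 1))
        * preR W x0 D j p := by
  unfold preR
  rw [hW, segProdD_smul W W' c hW D j.val, Matrix.mul_smul, Matrix.smul_mul, smul_smul,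
    mulVecE_smul]
  ring

lemma scale_factor_pos (c : Fin n → ℝ) (hc : ∀ j, 0 < c j) (j : Fin n) :
    0 < c j * ∏ k ∈ Finset.range j.val, (if h : k < n then c ⟨k, h⟩ else 1) := by
  apply mul_pos (hc j)
  apply Finset.prod_pos
  intro k _
  by_cases h : k < n
  · rw [dif_pos h]; exact hc _
  · rw [dif_neg h]; exact one_pos

lemma actVec_apply (α α' : ℝ) {p : ℕ} (v : EuclideanSpace ℝ (Fin p)) (i : Fin p) :
    actVec α α' v i = actFn α α' (v i) := rfl

lemma mulVecE_mul_apply {p q r : ℕ} (A : Matrix (Fin p) (Fin q) ℝ)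
    (B : Matrix (Fin q) (Fin r) ℝ) (v : EuclideanSpace ℝ (Fin r)) (i : Fin p) :
    mulVecE (A * B) v i = A.mulVec (fun t => mulVecE B v t) i := by
  rw [← mulVecE_mulVecE]
  rfl

lemma layer_pattern_eq (α α' : ℝ) (W : WeightFam n dims)
    (x0 : EuclideanSpace ℝ (Fin (dims 0)))
    (D : (j : ℕ) → Fin (dims j) → ℝ)
    (HD : ∀ p, D n p = 1)
    (H : ∀ (j : Fin n), j.val + 1 ≠ n → ∀ p : Fin (dims (j.val+1)),
      actFn α α' (preR W x0 D j p) = D (j.val+1) p * preR W x0 D j p) :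
    ∀ k, k ≤ n → layerOut α α' dims W x0 k = mulVecE (segProdD dims W D 0 k) x0 := by
  intro k
  induction k with
  | zero => intro _; rw [layerOut_zero, segProdD_zero, mulVecE_one]
  | succ k ihk =>
    intro hk1
    have hk : k < n := by omega
    have hIH := ihk (by omega)
    rw [layerOut_succ, dif_pos hk, segProdD_succ, if_neg (by omega : ¬(0 = k+1)), dif_pos hk]
    by_cases h : k + 1 = n
    · rw [if_pos h]
      have hD1 : Matrix.diagonal (D (k+1)) = (1 : Matrix (Fin (dims (k+1))) (Fin (dims (k+1))) ℝ) := by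
        have hfun : D (k+1) = fun _ => 1 := by
          subst h; funext pp; exact HD pp
        rw [hfun]
        exact Matrix.diagonal_one
      rw [hD1, Matrix.one_mul, hIH, mulVecE_mulVecE]
    · rw [if_neg h]
      rw [hIH]
      ext p
      rw [actVec_apply, mulVecE_mulVecE]
      have hpre : mulVecE (W ⟨k, hk⟩ * segProdD dims W D 0 k) x0 p
          = preR W x0 D ⟨k, hk⟩ p := rfl
      rw [hpre, H ⟨k, hk⟩ h p]
      rw [Matrix.mul_assoc, mulVecE_mul_apply, Matrix.mulVec_diagonal]
      rfl

def starVec (α α' : ℝ) (W : WeightFam n dims) (x0 : EuclideanSpace ℝ (Fin (dims 0))) :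
    (j : ℕ) → Fin (dims j) → ℝ
  | 0 => fun p => x0 p
  | m+1 => fun p =>
      if hm : m < n then
        (if m+1 = n then 1
         else if 0 ≤ (W ⟨m, hm⟩).mulVec (starVec α α' W x0 m) p then α else α') *
          (W ⟨m, hm⟩).mulVec (starVec α α' W x0 m) p
      else 0

def Dfun (α α' : ℝ) (b : (j : Fin n) → Fin (dims (j.val+1)) → Bool) :
    (j : ℕ) → Fin (dims j) → ℝ
  | 0 => fun _ => 1
  | m+1 => fun p =>
      if m+1 = n then 1
      else if hm : m < n then (if b ⟨m, hm⟩ p then α else α') else 1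

lemma Dfun_at_n (α α' : ℝ) (b : (j : Fin n) → Fin (dims (j.val+1)) → Bool)
    (hn : 0 < n) (p : Fin (dims n)) : Dfun α α' b n p = 1 := by
  match n, hn, b, p with
  | m+1, _, b, p => simp [Dfun]

lemma Dfun_mid (α α' : ℝ) (b : (j : Fin n) → Fin (dims (j.val+1)) → Bool)
    (j : ℕ) (h1 : 1 ≤ j) (h2 : j + 1 ≤ n) (p : Fin (dims j)) :
    Dfun α α' b j p = α ∨ Dfun α α' b j p = α' := by
  match j, h1, p with
  | m+1, _, p =>
    simp only [Dfun]
    rw [if_neg (by omega : ¬(m+1 = n)), dif_pos (by omega : m < n)]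
    by_cases hb : b ⟨m, by omega⟩ p
    · left; rw [if_pos hb]
    · right; rw [if_neg hb]

lemma seg_star (α α' : ℝ) (W : WeightFam n dims) (x0 : EuclideanSpace ℝ (Fin (dims 0)))
    (b : (j : Fin n) → Fin (dims (j.val+1)) → Bool)
    (hb : ∀ (j : Fin n) (p : Fin (dims (j.val+1))),
      b j p = decide (0 ≤ (W j).mulVec (starVec α α' W x0 j.val) p)) :
    ∀ jn (p : Fin (dims jn)),
      mulVecE (segProdD dims W (Dfun α α' b) 0 jn) x0 p = starVec α α' W x0 jn p := by
  intro jn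
  induction jn with
  | zero =>
    intro p
    rw [segProdD_zero, mulVecE_one]
    rfl
  | succ m ihm =>
    intro p
    rw [segProdD_succ, if_neg (by omega : ¬(0 = m+1))]
    by_cases hm : m < n
    · rw [dif_pos hm]
      have hvec : (fun t => mulVecE (segProdD dims W (Dfun α α' b) 0 m) x0 t)
          = starVec α α' W x0 m := funext ihm
      rw [Matrix.mul_assoc, mulVecE_mul_apply, Matrix.mulVec_diagonal,
        mulVecE_mul_apply, hvec]
      show Dfun α α' b (m+1) p * _ = starVec α α' W x0 (m+1) p
      simp only [starVec, Dfun]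
      rw [dif_pos hm, dif_pos hm]
      congr 1
      by_cases hcase : m + 1 = n
      · rw [if_pos hcase, if_pos hcase]
      · rw [if_neg hcase, if_neg hcase, hb ⟨m, hm⟩ p]
        by_cases hz : 0 ≤ (W ⟨m, hm⟩).mulVec (starVec α α' W x0 m) p
        · rw [if_pos hz, if_pos (by simpa using hz)]
        · rw [if_neg hz, if_neg (by simpa using hz)]
    · rw [dif_neg hm, mulVecE_zero]
      simp only [starVec, dif_neg hm]
      rfl

end Net2

open MeasureTheory in
/-- Proposition A.1 of the paper: for Lebesgue-almost every weight
setting `θ'`, the training loss of a fully connected network with homogeneous non-linear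
activation coincides, on an open region containing `θ'` that is closed under positive
rescaling of the weight matrices, with a fixed-activation-pattern function. -/
theorem relu_net_regions_of_differentiability {n d : ℕ} (hn : 2 ≤ n) (dims : ℕ → ℕ)
    (α α' : ℝ) (hα : α ≠ α')
    {Y : Type*} (s : ℕ) (hs : 0 < s)
    (x : Fin s → EuclideanSpace ℝ (Fin (dims 0))) (y : Fin s → Y)
    (loss : EuclideanSpace ℝ (Fin (dims n)) → Y → ℝ)
    (hconv : ∀ yy : Y, ConvexOn ℝ Set.univ (fun v => loss v yy))
    (hsm : ∀ yy : Y, ContDiff ℝ 2 (fun v => loss v yy))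
    (arr : EuclideanSpace ℝ (Fin d) →ₗ[ℝ] WeightFam n dims)
    (harr : Function.Bijective arr)
    (hinner : ∀ u v : EuclideanSpace ℝ (Fin d), ⟪u, v⟫ =
      ∑ j : Fin n, ∑ p : Fin (dims (j.val + 1)), ∑ q : Fin (dims j.val),
        arr u j p q * arr v j p q) :
    ∀ᵐ θ' ∂(volume : Measure (EuclideanSpace ℝ (Fin d))),
      ∃ D : Fin s → (j : ℕ) → Fin (dims j) → ℝ,
        (∀ i j, 1 ≤ j → j + 1 ≤ n → ∀ p, D i j p = α ∨ D i j p = α') ∧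
        (∀ i p, D i n p = 1) ∧
        ∃ U : Set (EuclideanSpace ℝ (Fin d)), IsOpen U ∧ θ' ∈ U ∧
          (∀ θ ∈ U, ∀ c : Fin n → ℝ, (∀ j, 0 < c j) →
            ∀ θ₂ : EuclideanSpace ℝ (Fin d),
              (∀ j : Fin n, arr θ₂ j = c j • arr θ j) → θ₂ ∈ U) ∧
          ∀ θ ∈ U, netLossNL dims α α' loss x y arr θ = patLoss dims loss x y D arr θ := by
  classical
  -- the "bad" null set
  set B : Set (EuclideanSpace ℝ (Fin d)) :=
    ⋃ (b : Fin s → (j : Fin n) → Fin (dims (j.val+1)) → Bool) (i : Fin s) (j : Fin n)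
      (p : Fin (dims (j.val+1))),
      {θ | preP arr (x i) (Dfun α α' (b i)) j p ≠ 0 ∧
        MvPolynomial.eval (fun k => θ k) (preP arr (x i) (Dfun α α' (b i)) j p) = 0} with hBdef
  have hB : volume B = 0 := by
    refine measure_iUnion_null fun b => measure_iUnion_null fun i =>
      measure_iUnion_null fun j => measure_iUnion_null fun p => ?_
    by_cases hP : preP arr (x i) (Dfun α α' (b i)) j p = 0
    · convert measure_empty
      · ext θ; simp [hP]
      · infer_instance
    · refine measure_mono_null (fun θ hθ => hθ.2) (euclid_zero_null _ hP)
  rw [show (volume : Measure (EuclideanSpace ℝ (Fin d))) = volume from rfl]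
  have hae : ∀ᵐ θ' ∂(volume : Measure (EuclideanSpace ℝ (Fin d))), θ' ∉ B :=
    measure_eq_zero_iff_ae_notMem.mp hB
  filter_upwards [hae] with θ' hθ'
  -- the activation pattern of θ'
  set bstar : Fin s → (j : Fin n) → Fin (dims (j.val+1)) → Bool :=
    fun i j p => decide (0 ≤ (arr θ' j).mulVec (starVec α α' (arr θ') (x i) j.val) p)
    with hbstar
  set Di : Fin s → (j : ℕ) → Fin (dims j) → ℝ := fun i => Dfun α α' (bstar i) with hDi
  have key : ∀ (i : Fin s) (j : Fin n) (p : Fin (dims (j.val+1))),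
      preP arr (x i) (Di i) j p ≠ 0 →
      MvPolynomial.eval (fun k => θ' k) (preP arr (x i) (Di i) j p) ≠ 0 := by
    intro i j p hP hev
    exact hθ' (Set.mem_iUnion.mpr ⟨bstar, Set.mem_iUnion.mpr ⟨i, Set.mem_iUnion.mpr ⟨j,
      Set.mem_iUnion.mpr ⟨p, ⟨hP, hev⟩⟩⟩⟩⟩)
  refine ⟨Di, ?_, ?_, ?_⟩
  · intro i j h1 h2 p
    exact Dfun_mid α α' (bstar i) j h1 h2 p
  · intro i p
    exact Dfun_at_n α α' (bstar i) (by omega) p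
  -- the open region
  set U : Set (EuclideanSpace ℝ (Fin d)) :=
    ⋂ (i : Fin s) (j : Fin n) (p : Fin (dims (j.val+1))),
      (if preP arr (x i) (Di i) j p = 0 then Set.univ else
        {θ : EuclideanSpace ℝ (Fin d) |
          0 < MvPolynomial.eval (fun k => θ k) (preP arr (x i) (Di i) j p) *
            MvPolynomial.eval (fun k => θ' k) (preP arr (x i) (Di i) j p)}) with hUdef
  have hUmem : ∀ θ, θ ∈ U ↔ ∀ (i : Fin s) (j : Fin n) (p : Fin (dims (j.val+1))),
      preP arr (x i) (Di i) j p ≠ 0 →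
      0 < MvPolynomial.eval (fun k => θ k) (preP arr (x i) (Di i) j p) *
        MvPolynomial.eval (fun k => θ' k) (preP arr (x i) (Di i) j p) := by
    intro θ
    rw [hUdef]
    simp only [Set.mem_iInter]
    constructor
    · intro h i j p hP
      have := h i j p
      rwa [if_neg hP] at this
    · intro h i j p
      by_cases hP : preP arr (x i) (Di i) j p = 0
      · rw [if_pos hP]; trivial
      · rw [if_neg hP]; exact h i j p hP
  -- star-vector identification of the pattern preactivation at θ'
  have hstar : ∀ (i : Fin s) (j : Fin n) (p : Fin (dims (j.val+1))),
      preR (arr θ') (x i) (Di i) j p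
        = (arr θ' j).mulVec (starVec α α' (arr θ') (x i) j.val) p := by
    intro i j p
    have hseg := seg_star α α' (arr θ') (x i) (bstar i) (fun j p => rfl)
    unfold preR
    rw [mulVecE_mul_apply]
    congr 1
    funext t
    exact hseg j.val t
  refine ⟨U, ?_, ?_, ?_, ?_⟩
  · -- openness
    refine isOpen_iInter_of_finite fun i => isOpen_iInter_of_finite fun j =>
      isOpen_iInter_of_finite fun p => ?_
    by_cases hP : preP arr (x i) (Di i) j p = 0
    · rw [if_pos hP]; exact isOpen_univ
    · rw [if_neg hP]
      exact isOpen_lt continuous_const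
        ((euclid_continuous_eval _).mul continuous_const)
  · -- θ' ∈ U
    rw [hUmem]
    intro i j p hP
    exact mul_self_pos.mpr (key i j p hP)
  · -- closure under positive rescaling
    intro θ hθ c hc θ₂ hθ₂
    rw [hUmem] at hθ ⊢
    intro i j p hP
    have h1 := hθ i j p hP
    rw [preP_eval] at h1 ⊢
    rw [preR_smul (arr θ) (arr θ₂) c hθ₂ (x i) (Di i) j p]
    have hκ := scale_factor_pos c hc j
    calc (0:ℝ) < (c j * ∏ k ∈ Finset.range j.val, (if h : k < n then c ⟨k, h⟩ else 1)) *
        (preR (arr θ) (x i) (Di i) j p *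
          MvPolynomial.eval (fun k => θ' k) (preP arr (x i) (Di i) j p)) :=
          mul_pos hκ h1
      _ = _ := by ring
  · -- equality of losses on U
    intro θ hθ
    rw [hUmem] at hθ
    have hlayer : ∀ i : Fin s,
        layerOut α α' dims (arr θ) (x i) n
          = mulVecE (segProdD dims (arr θ) (Di i) 0 n) (x i) := by
      intro i
      refine layer_pattern_eq α α' (arr θ) (x i) (Di i)
        (fun p => Dfun_at_n α α' (bstar i) (by omega) p) ?_ n le_rfl
      intro j hj p
      by_cases hP : preP arr (x i) (Di i) j p = 0
      · have h0 : preR (arr θ) (x i) (Di i) j p = 0 := by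
          rw [← preP_eval, hP, map_zero]
        rw [h0, mul_zero]
        simp [actFn]
      · have hprod := hθ i j p hP
        rw [preP_eval, preP_eval] at hprod
        have hz' : preR (arr θ') (x i) (Di i) j p ≠ 0 := by
          rw [← preP_eval]
          exact key i j p hP
        have hD : Di i (j.val + 1) p
            = if 0 ≤ preR (arr θ') (x i) (Di i) j p then α else α' := by
          rw [hDi]
          simp only [Dfun]
          rw [if_neg hj, dif_pos j.isLt]
          rw [hstar i j p]
          by_cases hz : 0 ≤ (arr θ' j).mulVec (starVec α α' (arr θ') (x i) j.val) p
          · rw [if_pos hz]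
            have : bstar i ⟨j.val, j.isLt⟩ p = true := by
              rw [hbstar]; simpa using hz
            rw [this, if_pos rfl]
          · rw [if_neg hz]
            have : bstar i ⟨j.val, j.isLt⟩ p = false := by
              rw [hbstar]; simpa using hz
            rw [this]; simp
        rw [hD]
        by_cases hb0 : 0 ≤ preR (arr θ') (x i) (Di i) j p
        · have hbpos : 0 < preR (arr θ') (x i) (Di i) j p :=
            lt_of_le_of_ne hb0 (Ne.symm hz')
          have hapos : 0 < preR (arr θ) (x i) (Di i) j p := by nlinarith
          rw [if_pos hb0]
          exact (actFn_sign α α' _).1 hapos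
        · have hbneg : preR (arr θ') (x i) (Di i) j p < 0 := by
            push_neg at hb0; exact hb0
          have haneg : preR (arr θ) (x i) (Di i) j p < 0 := by nlinarith
          rw [if_neg hb0]
          exact (actFn_sign α α' _).2.1 haneg
    unfold netLossNL patLoss
    congr 1
    refine Finset.sum_congr rfl fun i _ => ?_
    rw [hlayer i]
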